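/- arXiv:2209.12833 — 7 statements merged into one kernel-verified Lean document; each statement's English description precedes it below -/
import Mathlib

section
/- If K is a non-Archimedean valued field satisfying |∑_{j=1}^n λ_j²| = max_{1≤j≤n} |λ_j|² for all λ_1,…,λ_n ∈ K and all n, then for any λ_1,…,λ_d ∈ K one has |∑_{k=1}^d λ_k|² ≤ |d| · |∑_{k=1}^d λ_k²|. -/
/-!
Put `S = ∑ λ_k` and `T = ∑ λ_k²`. The identity `∑_{j,k} (λ_j - λ_k)² = 2 d T - 2 S²` writes
`2 d T` as a sum of squares `S² + S² + ∑_{j,k} (λ_j - λ_k)²`, so the hypothesis gives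
`|S|² ≤ |2 d T|`. The same hypothesis applied to `1² + 1²` gives `|2| = 1`.
-/

open Finset

section RingIdentity

variable {R ι : Type*} [CommRing R] [Fintype ι]

theorem sum_sum_sub_sq (f : ι → R) :
    ∑ j, ∑ k, (f j - f k) ^ 2 = 2 * Fintype.card ι * ∑ k, f k ^ 2 - 2 * (∑ k, f k) ^ 2 := by
  simp only [sub_sq, sum_add_distrib, sum_sub_distrib, sum_const, card_univ, nsmul_eq_mul,
    mul_assoc, ← mul_sum, ← sum_mul]
  ring

end RingIdentity

namespace AbsoluteValue

variable {K : Type*} [Field K]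

def SumSqEqSupSq (v : AbsoluteValue K ℝ) : Prop :=
  ∀ (n : ℕ) (lam : Fin (n + 1) → K),
    v (∑ j, (lam j) ^ 2) = Finset.univ.sup' Finset.univ_nonempty (fun j => (v (lam j)) ^ 2)

variable {v : AbsoluteValue K ℝ}

theorem SumSqEqSupSq.sq_le_sum_sq (hsq : v.SumSqEqSupSq) {ι : Type*} [Fintype ι]
    (g : ι → K) (i : ι) : v (g i) ^ 2 ≤ v (∑ j, g j ^ 2) := by
  have : Nonempty ι := ⟨i⟩
  obtain ⟨n, hn⟩ := Nat.exists_eq_add_one_of_ne_zero (Fintype.card_ne_zero (α := ι))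
  let e : ι ≃ Fin (n + 1) := (Fintype.equivFin ι).trans (finCongr hn)
  calc v (g i) ^ 2 = v (g (e.symm (e i))) ^ 2 := by rw [e.symm_apply_apply]
    _ ≤ univ.sup' univ_nonempty (fun j => v (g (e.symm j)) ^ 2) :=
        le_sup' (fun j => v (g (e.symm j)) ^ 2) (mem_univ _)
    _ = v (∑ j, g (e.symm j) ^ 2) := (hsq n _).symm
    _ = v (∑ j, g j ^ 2) := by rw [e.symm.sum_comp (fun j => g j ^ 2)]

theorem SumSqEqSupSq.sq_le_sq_add_sum_sq (hsq : v.SumSqEqSupSq) {ι : Type*} [Fintype ι]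
    (x : K) (g : ι → K) : v x ^ 2 ≤ v (x ^ 2 + ∑ i, g i ^ 2) := by
  simpa [Fintype.sum_option] using hsq.sq_le_sum_sq (fun i : Option ι => i.elim x g) none

theorem SumSqEqSupSq.map_two (hsq : v.SumSqEqSupSq) : v 2 = 1 := by
  simpa [Fin.sum_univ_two, one_add_one_eq_two] using hsq 1 (fun _ => 1)

theorem SumSqEqSupSq.sq_map_sum_le (hsq : v.SumSqEqSupSq) {ι : Type*} [Fintype ι]
    (lam : ι → K) :
    v (∑ k, lam k) ^ 2 ≤ v (Fintype.card ι : K) * v (∑ k, lam k ^ 2) := by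
  set S := ∑ k, lam k
  have hsplit : 2 * (Fintype.card ι : K) * ∑ k, lam k ^ 2
      = S ^ 2 + ∑ i : Option (ι × ι), (i.elim S fun p => lam p.1 - lam p.2) ^ 2 := by
    rw [Fintype.sum_option, Option.elim_none, Fintype.sum_prod_type]
    simp only [Option.elim_some, sum_sum_sub_sq]
    ring
  calc v S ^ 2 ≤ v (2 * (Fintype.card ι : K) * ∑ k, lam k ^ 2) :=
        hsplit ▸ hsq.sq_le_sq_add_sum_sq S _
    _ = v (Fintype.card ι : K) * v (∑ k, lam k ^ 2) := by
        rw [map_mul, map_mul, hsq.map_two, one_mul]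

end AbsoluteValue

theorem stmt_0_general (K : Type*) [Field K] (v : AbsoluteValue K ℝ)
    (hsq : ∀ (n : ℕ) (lam : Fin (n + 1) → K),
      v (∑ j, (lam j) ^ 2) =
        Finset.univ.sup' Finset.univ_nonempty (fun j => (v (lam j)) ^ 2))
    (d : ℕ) (lam : Fin d → K) :
    (v (∑ k, lam k)) ^ 2 ≤ v (d : K) * v (∑ k, (lam k) ^ 2) := by
  simpa using AbsoluteValue.SumSqEqSupSq.sq_map_sum_le hsq lam

theorem stmt_0 (K : Type*) [Field K] (v : AbsoluteValue K ℝ)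
    (hna : IsNonarchimedean v)
    (hsq : ∀ (n : ℕ) (lam : Fin (n + 1) → K),
      v (∑ j, (lam j) ^ 2) =
        Finset.univ.sup' Finset.univ_nonempty (fun j => (v (lam j)) ^ 2))
    (d : ℕ) (lam : Fin d → K) :
    (v (∑ k, lam k)) ^ 2 ≤ v (d : K) * v (∑ k, (lam k) ^ 2) :=
  stmt_0_general K v hsq d lam
end

section
/- (First order non-Archimedean functional Welch bound, finite version) Let K be a non-Archimedean valued field satisfying |∑ λ_j²| = max |λ_j|², let X be a d-dimensional normed space over K, let τ_1,…,τ_n ∈ X and f_1,…,f_n ∈ X* be such that the operator S : x ↦ ∑_{j=1}^n f_j(x)τ_j is diagonalizable with eigenvalues λ_1,…,λ_d. Then |∑_{j=1}^n f_j(τ_j)|² ≤ |d| · max{ |∑_{j=1}^n f_j(τ_j)²| , max_{j≠k} |f_j(τ_k) f_k(τ_j)| }. -/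
open Finset

lemma na_sum_le {K : Type*} [Field K] (v : AbsoluteValue K ℝ)
    (hna : IsNonarchimedean v) {ι : Type*} (s : Finset ι) (hs : s.Nonempty)
    (g : ι → K) : v (∑ i ∈ s, g i) ≤ s.sup' hs (fun i => v (g i)) := by
  induction hs using Finset.Nonempty.cons_induction with
  | singleton a => simp
  | cons a s ha hs ih =>
      rw [Finset.sum_cons, Finset.sup'_cons hs]
      exact le_trans (hna _ _) (max_le_max le_rfl ih)

theorem stmt_2 (K : Type*) [Field K] (v : AbsoluteValue K ℝ)
    (hna : IsNonarchimedean v)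
    (hsq : ∀ (N : ℕ) (lam : Fin (N + 1) → K),
      v (∑ j, (lam j) ^ 2) =
        Finset.univ.sup' Finset.univ_nonempty (fun j => (v (lam j)) ^ 2))
    (X : Type*) [AddCommGroup X] [Module K X] [FiniteDimensional K X]
    (d : ℕ) (hd : Module.finrank K X = d)
    (n : ℕ) (τ : Fin n → X) (f : Fin n → (X →ₗ[K] K))
    (b : Module.Basis (Fin d) K X) (lam : Fin d → K)
    (hdiag : ∀ i, ∑ j, f j (b i) • τ j = lam i • b i) :
    (v (∑ j, f j (τ j))) ^ 2 ≤
      v (d : K) *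
        max (v (∑ j, (f j (τ j)) ^ 2))
          (sSup {x : ℝ | ∃ j k, j ≠ k ∧ x = v (f j (τ k) * f k (τ j))}) := by
  classical
  -- the off-diagonal set is bounded above
  set Soff : Set ℝ := {x : ℝ | ∃ j k, j ≠ k ∧ x = v (f j (τ k) * f k (τ j))} with hSoff
  have hSfin : Soff.Finite := by
    apply Set.Finite.subset (Set.finite_range
      (fun p : Fin n × Fin n => v (f p.1 (τ p.2) * f p.2 (τ p.1))))
    rintro x ⟨j, k, -, rfl⟩
    exact ⟨(j, k), rfl⟩
  have hSbdd : BddAbove Soff := hSfin.bddAbove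
  rcases d with - | m
  · -- trivial case: X is zero
    have hsub : Subsingleton X := by
      rw [← Module.finrank_zero_iff (R := K)] at *
      exact hd
    have h0 : ∀ j : Fin n, f j (τ j) = 0 := fun j => by
      rw [Subsingleton.elim (τ j) (0 : X), map_zero]
    simp [h0]
  · -- main case
    -- coordinates of eigenvalues
    have hlam : ∀ i, lam i = ∑ j, f j (b i) * b.repr (τ j) i := by
      intro i
      have h := congrArg (fun x => b.repr x i) (hdiag i)
      simpa [Finsupp.single_apply] using h.symm
    have hc : ∀ (j k : Fin n), f k (τ j) = ∑ i, b.repr (τ j) i * f k (b i) := by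
      intro j k
      conv_lhs => rw [← b.sum_repr (τ j)]
      simp only [map_sum, map_smul, smul_eq_mul]
    -- first trace identity
    have htr1 : ∑ j, f j (τ j) = ∑ i, lam i := by
      simp only [hlam]
      rw [Finset.sum_comm]
      refine Finset.sum_congr rfl fun j _ => ?_
      rw [hc j j]
      exact Finset.sum_congr rfl fun i _ => by ring
    -- applying f k to the eigen-equation
    have hfk : ∀ i (k : Fin n), ∑ j, f j (b i) * f k (τ j) = lam i * f k (b i) := by
      intro i k
      have h := congrArg (f k) (hdiag i)
      simpa using h
    -- second trace identity
    have htr2 : ∑ i, lam i ^ 2 = ∑ j, ∑ k, f j (τ k) * f k (τ j) := by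
      calc ∑ i, lam i ^ 2
          = ∑ i, ∑ j, b.repr (τ j) i * (lam i * f j (b i)) := by
            refine Finset.sum_congr rfl fun i _ => ?_
            rw [pow_two]
            nth_rewrite 1 [hlam i]
            rw [Finset.sum_mul]
            exact Finset.sum_congr rfl fun j _ => by ring
        _ = ∑ i, ∑ j, b.repr (τ j) i * (∑ k, f k (b i) * f j (τ k)) := by
            refine Finset.sum_congr rfl fun i _ => Finset.sum_congr rfl fun j _ => ?_
            rw [hfk i j]
        _ = ∑ j, ∑ k, f j (τ k) * f k (τ j) := by
            rw [Finset.sum_comm]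
            refine Finset.sum_congr rfl fun j _ => ?_
            simp_rw [Finset.mul_sum]
            rw [Finset.sum_comm]
            refine Finset.sum_congr rfl fun k _ => ?_
            rw [hc j k, Finset.mul_sum]
            exact Finset.sum_congr rfl fun i _ => by ring
    -- |d| = 1
    have hvd : v ((m + 1 : ℕ) : K) = 1 := by
      have h := hsq m (fun _ => (1 : K))
      simpa using h
    rw [hvd, one_mul]
    -- split the double sum into diagonal and off-diagonal parts
    set D : K := ∑ j, (f j (τ j)) ^ 2 with hD
    set E : K := ∑ p ∈ (Finset.univ : Finset (Fin n)).offDiag,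
      f p.1 (τ p.2) * f p.2 (τ p.1) with hE
    have hsplit : ∑ j, ∑ k, f j (τ k) * f k (τ j) = D + E := by
      rw [← Finset.sum_product']
      rw [← Finset.diag_union_offDiag (Finset.univ : Finset (Fin n)),
        Finset.sum_union (Finset.disjoint_diag_offDiag _), Finset.sum_diag]
      congr 1
      exact Finset.sum_congr rfl fun j _ => by ring
    -- bound the off-diagonal part
    have hEle : v E ≤ max (v D) (sSup Soff) := by
      rcases Finset.eq_empty_or_nonempty
        ((Finset.univ : Finset (Fin n)).offDiag) with he | he
      · rw [hE, he, Finset.sum_empty, v.map_zero]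
        exact le_max_of_le_left (v.nonneg D)
      · refine le_max_of_le_right ?_
        refine le_trans (na_sum_le v hna _ he _) (Finset.sup'_le he _ fun p hp => ?_)
        obtain ⟨-, -, hne⟩ := Finset.mem_offDiag.mp hp
        exact le_csSup hSbdd ⟨p.1, p.2, hne, rfl⟩
    -- main chain of inequalities
    have h1 : v (∑ j, f j (τ j)) ^ 2 ≤ v (∑ i, lam i ^ 2) := by
      rw [htr1, hsq m lam]
      have h2 := na_sum_le v hna Finset.univ Finset.univ_nonempty lam
      calc v (∑ i, lam i) ^ 2
          ≤ (Finset.univ.sup' Finset.univ_nonempty fun i => v (lam i)) ^ 2 :=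
            pow_le_pow_left₀ (v.nonneg _) h2 2
        _ ≤ Finset.univ.sup' Finset.univ_nonempty fun i => v (lam i) ^ 2 := by
            obtain ⟨i0, -, h⟩ := Finset.exists_mem_eq_sup' Finset.univ_nonempty
              (fun i => v (lam i))
            rw [h]
            exact Finset.le_sup' (fun i => v (lam i) ^ 2) (Finset.mem_univ i0)
    refine le_trans h1 ?_
    rw [htr2, hsplit]
    refine le_trans (hna D E) ?_
    exact max_le (le_max_of_le_left le_rfl) hEle
end

section
/- (First order p-adic functional Welch bound, finite tight version) Let p be prime, X a d-dimensional vector space over ℚ_p, τ_1,…,τ_n ∈ X and f_1,…,f_n ∈ X* such that ∑_{j=1}^n f_j(x)τ_j = b·x for all x ∈ X for some b ∈ ℚ_p. Then |∑_{j=1}^n f_j(τ_j)|_p² ≤ |d|_p · max{ |∑_{j=1}^n f_j(τ_j)²|_p , max_{j≠k} |f_j(τ_k) f_k(τ_j)|_p }. -/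
/-!
Let `S = ∑ⱼ fⱼ(·) τⱼ = b · id`, `c = ∑ⱼ fⱼ(τⱼ)` and `T = ∑ⱼₖ fⱼ(τₖ) fₖ(τⱼ)`. Taking the trace of `S`
gives `c = b d`, and applying `fₖ` to `S τₖ = b τₖ` and summing gives `T = b c`; hence `c² = d T`.
The ultrametric inequality bounds `|T|_p` by the maximum of its diagonal part `∑ⱼ fⱼ(τⱼ)²` and
its off-diagonal terms.
-/

open Finset

section FrameOperator

variable {R M ι : Type*} [CommRing R] [AddCommGroup M] [Module R M] [Fintype ι]
  {τ : ι → M} {f : ι → M →ₗ[R] R} {b : R}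

theorem sum_apply_self_eq_mul_finrank [Module.Free R M] [Module.Finite R M]
    (hb : ∀ x, ∑ j, f j x • τ j = b • x) :
    ∑ j, f j (τ j) = b * Module.finrank R M := by
  have hS : ∑ j, (f j).smulRight (τ j) = b • LinearMap.id := by
    ext x
    simpa using hb x
  simpa [smul_eq_mul] using congrArg (LinearMap.trace R M) hS

theorem sum_apply_mul_apply_eq_mul_sum (hb : ∀ x, ∑ j, f j x • τ j = b • x) :
    ∑ j, ∑ k, f j (τ k) * f k (τ j) = b * ∑ j, f j (τ j) := by
  rw [sum_comm, mul_sum]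
  refine sum_congr rfl fun k _ => ?_
  simpa [mul_comm] using congrArg (f k) (hb (τ k))

theorem sq_sum_apply_self_eq_finrank_mul [Module.Free R M] [Module.Finite R M]
    (hb : ∀ x, ∑ j, f j x • τ j = b • x) :
    (∑ j, f j (τ j)) ^ 2 = Module.finrank R M * ∑ j, ∑ k, f j (τ k) * f k (τ j) := by
  rw [sum_apply_mul_apply_eq_mul_sum hb, sum_apply_self_eq_mul_finrank hb]
  ring

end FrameOperator

theorem IsUltrametricDist.norm_sum_sum_le_max_diag_offDiag {E ι : Type*}
    [SeminormedAddCommGroup E] [IsUltrametricDist E] [Fintype ι] (a : ι → ι → E) :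
    ‖∑ j, ∑ k, a j k‖ ≤
      max ‖∑ j, a j j‖ (sSup {x : ℝ | ∃ j k, j ≠ k ∧ x = ‖a j k‖}) := by
  classical
  set offDiag := {x : ℝ | ∃ j k, j ≠ k ∧ x = ‖a j k‖}
  have hbdd : BddAbove offDiag := by
    refine ((Set.finite_range fun q : ι × ι => ‖a q.1 q.2‖).subset ?_).bddAbove
    rintro _ ⟨j, k, -, rfl⟩
    exact ⟨(j, k), rfl⟩
  have hnonneg : 0 ≤ sSup offDiag := by
    refine Real.sSup_nonneg ?_
    rintro _ ⟨j, k, -, rfl⟩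
    exact norm_nonneg _
  have hsplit : ∑ j, ∑ k, a j k = ∑ j, a j j + ∑ j, ∑ k ∈ univ.erase j, a j k := by
    rw [← sum_add_distrib]
    exact sum_congr rfl fun j _ => (add_sum_erase _ _ (mem_univ j)).symm
  have hoff : ‖∑ j, ∑ k ∈ univ.erase j, a j k‖ ≤ sSup offDiag :=
    IsUltrametricDist.norm_sum_le_of_forall_le_of_nonneg hnonneg fun j _ =>
      IsUltrametricDist.norm_sum_le_of_forall_le_of_nonneg hnonneg fun k hk =>
        le_csSup hbdd ⟨j, k, (mem_erase.mp hk).1.symm, rfl⟩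
  rw [hsplit]
  exact (IsUltrametricDist.norm_add_le_max _ _).trans (max_le_max le_rfl hoff)

theorem stmt_5 (p : ℕ) [Fact p.Prime]
    (X : Type*) [AddCommGroup X] [Module ℚ_[p] X] [FiniteDimensional ℚ_[p] X]
    (d : ℕ) (hd : Module.finrank ℚ_[p] X = d)
    (n : ℕ) (τ : Fin n → X) (f : Fin n → (X →ₗ[ℚ_[p]] ℚ_[p]))
    (b : ℚ_[p]) (hb : ∀ x : X, ∑ j, f j x • τ j = b • x) :
    ‖∑ j, f j (τ j)‖ ^ 2 ≤
      ‖(d : ℚ_[p])‖ *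
        max (‖∑ j, (f j (τ j)) ^ 2‖)
          (sSup {x : ℝ | ∃ j k, j ≠ k ∧ x = ‖f j (τ k) * f k (τ j)‖}) := by
  rw [← norm_pow, sq_sum_apply_self_eq_finrank_mul hb, hd, norm_mul]
  gcongr
  simpa only [sq] using IsUltrametricDist.norm_sum_sum_le_max_diag_offDiag
    fun j k => f j (τ k) * f k (τ j)
end

section
/- (First order p-adic Welch bound with normalization) Let p be prime, X a d-dimensional ℚ_p-vector space, and τ_1,…,τ_n ∈ X, f_1,…,f_n ∈ X* with ∑_j f_j(x)τ_j = b·x for all x and some b ∈ ℚ_p, and with f_j(τ_j) = 1 for all j. Then max{ |n|_p , max_{j≠k} |f_j(τ_k)f_k(τ_j)|_p } ≥ |n|_p² / |d|_p. -/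
theorem stmt_6 (p : ℕ) [Fact p.Prime]
    (X : Type*) [AddCommGroup X] [Module ℚ_[p] X] [FiniteDimensional ℚ_[p] X]
    (d : ℕ) (hd : Module.finrank ℚ_[p] X = d)
    (n : ℕ) (τ : Fin n → X) (f : Fin n → (X →ₗ[ℚ_[p]] ℚ_[p]))
    (b : ℚ_[p]) (hb : ∀ x : X, ∑ j, f j x • τ j = b • x)
    (hnorm : ∀ j, f j (τ j) = 1) :
    max (‖(n : ℚ_[p])‖)
        (sSup {x : ℝ | ∃ j k, j ≠ k ∧ x = ‖f j (τ k) * f k (τ j)‖}) ≥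
      ‖(n : ℚ_[p])‖ ^ 2 / ‖(d : ℚ_[p])‖ := by
  rcases Nat.eq_zero_or_pos n with hn | hn
  · subst hn
    have he : {x : ℝ | ∃ j k, j ≠ k ∧ x = ‖f j (τ k) * f k (τ j)‖} = (∅ : Set ℝ) := by
      ext x
      simp only [Set.mem_setOf_eq, Set.mem_empty_iff_false, iff_false]
      rintro ⟨j, _, _⟩
      exact j.elim0
    rw [he, Real.sSup_empty]
    simp
  -- n ≥ 1 : d ≠ 0
  have hd0 : d ≠ 0 := by
    intro h
    rw [h] at hd
    have : Subsingleton X := Module.finrank_zero_iff.mp hd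
    have h1 := hnorm ⟨0, hn⟩
    rw [Subsingleton.elim (τ ⟨0, hn⟩) 0, map_zero] at h1
    exact one_ne_zero h1.symm
  have hdQ : ((d : ℚ_[p])) ≠ 0 := Nat.cast_ne_zero.mpr hd0
  have hnQ : ((n : ℚ_[p])) ≠ 0 := Nat.cast_ne_zero.mpr hn.ne'
  -- key identity 1: n = b * d
  have key1 : (n : ℚ_[p]) = b * d := by
    have hT : (∑ j, dualTensorHom ℚ_[p] X X (f j ⊗ₜ[ℚ_[p]] τ j)) =
        b • (LinearMap.id : X →ₗ[ℚ_[p]] X) := by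
      ext x
      simpa [dualTensorHom_apply] using hb x
    have htr := congrArg (LinearMap.trace ℚ_[p] X) hT
    rw [map_sum, map_smul] at htr
    have hdiag : ∀ j, LinearMap.trace ℚ_[p] X
        (dualTensorHom ℚ_[p] X X (f j ⊗ₜ[ℚ_[p]] τ j)) = f j (τ j) := by
      intro j
      rw [LinearMap.trace_eq_contract_apply, contractLeft_apply]
    simp only [hdiag, hnorm, LinearMap.trace_id, hd, smul_eq_mul, mul_one] at htr
    simpa using htr
  -- key identity 2: total double sum = b * n
  have key2 : ∑ x ∈ (Finset.univ : Finset (Fin n)) ×ˢ Finset.univ,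
      f x.1 (τ x.2) * f x.2 (τ x.1) = b * n := by
    rw [Finset.sum_product]
    have h1 : ∀ j : Fin n, ∑ k, f j (τ k) * f k (τ j) = b := by
      intro j
      have := congrArg (f j) (hb (τ j))
      rw [map_sum] at this
      simpa [smul_eq_mul, hnorm j, mul_comm] using this
    simp [h1, mul_comm]
  -- decompose into diagonal + off-diagonal
  set S := ∑ x ∈ (Finset.univ : Finset (Fin n)).offDiag, f x.1 (τ x.2) * f x.2 (τ x.1) with hS
  have hsplit : (n : ℚ_[p]) + S = b * n := by
    rw [← key2, ← Finset.diag_union_offDiag,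
      Finset.sum_union (Finset.disjoint_diag_offDiag _), Finset.sum_diag]
    congr 1
    simp [hnorm]
  have hSval : S = (n : ℚ_[p]) * (b - 1) := by
    have h := eq_sub_of_add_eq' hsplit
    rw [h]; ring
  rcases le_or_gt ‖b‖ 1 with hble | hbgt
  · -- ‖b‖ ≤ 1 case
    have hnn : ‖(n : ℚ_[p])‖ = ‖b‖ * ‖(d : ℚ_[p])‖ := by rw [key1, norm_mul]
    have hdpos : 0 < ‖(d : ℚ_[p])‖ := norm_pos_iff.mpr hdQ
    refine le_trans ?_ (le_max_left _ _)
    rw [hnn, div_le_iff₀ hdpos]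
    ring_nf
    nlinarith [mul_nonneg (mul_nonneg (sub_nonneg.mpr hble) (norm_nonneg b)) (mul_nonneg hdpos.le hdpos.le)]
  · -- ‖b‖ > 1 case
    have hb1 : b - 1 ≠ 0 := by
      intro h
      rw [sub_eq_zero.mp h] at hbgt
      simp at hbgt
    have hSne : S ≠ 0 := by
      rw [hSval]
      exact mul_ne_zero hnQ hb1
    have hne : ((Finset.univ : Finset (Fin n)).offDiag).Nonempty :=
      Finset.nonempty_of_sum_ne_zero hSne
    obtain ⟨i, hi, hile⟩ := IsUltrametricDist.exists_norm_finset_sum_le_of_nonempty hne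
      (fun x : Fin n × Fin n => f x.1 (τ x.2) * f x.2 (τ x.1))
    -- ‖b - 1‖ = ‖b‖
    have hb1norm : ‖b - 1‖ = ‖b‖ := by
      have h1 : ‖b - 1‖ ≤ max ‖b‖ ‖(1 : ℚ_[p])‖ := by
        have := Padic.nonarchimedean b (-1)
        rwa [← sub_eq_add_neg, norm_neg] at this
      have h2 : ‖b‖ ≤ max ‖b - 1‖ ‖(1 : ℚ_[p])‖ := by
        have := Padic.nonarchimedean (b - 1) 1
        rwa [sub_add_cancel] at this
      rw [norm_one] at h1 h2
      have hub : ‖b - 1‖ ≤ ‖b‖ := h1.trans (max_le le_rfl hbgt.le)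
      have hlb : ‖b‖ ≤ ‖b - 1‖ := by
        rcases le_max_iff.mp h2 with h | h
        · exact h
        · linarith
      exact le_antisymm hub hlb
    have hSnorm : ‖S‖ = ‖(n : ℚ_[p])‖ * ‖b‖ := by
      rw [hSval, norm_mul, hb1norm]
    -- RHS value
    have hnn : ‖(n : ℚ_[p])‖ = ‖b‖ * ‖(d : ℚ_[p])‖ := by rw [key1, norm_mul]
    have hdpos : 0 < ‖(d : ℚ_[p])‖ := norm_pos_iff.mpr hdQ
    have hrhs : ‖(n : ℚ_[p])‖ ^ 2 / ‖(d : ℚ_[p])‖ = ‖S‖ := by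
      rw [hSnorm, hnn]
      field_simp
    refine le_trans ?_ (le_max_right _ _)
    rw [hrhs]
    refine le_trans hile (le_csSup ?_ ?_)
    · apply Set.Finite.bddAbove
      apply Set.Finite.subset (Set.finite_range
        (fun x : Fin n × Fin n => ‖f x.1 (τ x.2) * f x.2 (τ x.1)‖))
      rintro y ⟨j, k, _, rfl⟩
      exact ⟨(j, k), rfl⟩
    · obtain ⟨-, -, hik⟩ := Finset.mem_offDiag.mp hi
      exact ⟨i.1, i.2, hik, rfl⟩
end

section
/- (Classical Welch bound, first order) Let n > d and let τ_1,…,τ_n be unit vectors in ℂ^d. Then ∑_{j=1}^n ∑_{k=1}^n |⟨τ_j, τ_k⟩|² ≥ n²/d. -/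
open Finset

theorem stmt_9 (d n : ℕ) (hnd : n > d)
    (τ : Fin n → EuclideanSpace ℂ (Fin d)) (hτ : ∀ j, ‖τ j‖ = 1) :
    ∑ j, ∑ k, ‖(inner ℂ (τ j) (τ k) : ℂ)‖ ^ 2 ≥ (n : ℝ) ^ 2 / (d : ℝ) := by
  -- d = 0 is impossible
  rcases Nat.eq_zero_or_pos d with hd | hd
  · subst hd
    have : n > 0 := hnd
    have h0 := hτ ⟨0, this⟩
    have : (τ ⟨0, this⟩) = 0 := Subsingleton.elim _ _
    rw [this, norm_zero] at h0
    norm_num at h0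
  -- lift to outer-product vectors
  set w : Fin n → EuclideanSpace ℂ (Fin d × Fin d) :=
    fun j => WithLp.toLp 2 (fun p : Fin d × Fin d => (starRingEnd ℂ) (τ j p.1) * τ j p.2) with hw
  set W : EuclideanSpace ℂ (Fin d × Fin d) := ∑ j, w j with hW
  set u : EuclideanSpace ℂ (Fin d × Fin d) := WithLp.toLp 2 (fun p : Fin d × Fin d => if p.1 = p.2 then 1 else 0) with hu
  have hinner : ∀ j k, (inner ℂ (w j) (w k) : ℂ) = (‖(inner ℂ (τ j) (τ k) : ℂ)‖ : ℂ) ^ 2 := by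
    intro j k
    have hc : (inner ℂ (τ j) (τ k) : ℂ) = ∑ i, (starRingEnd ℂ) (τ j i) * τ k i := by
      simp [PiLp.inner_apply, RCLike.inner_apply, mul_comm]
    have : (inner ℂ (w j) (w k) : ℂ)
        = (starRingEnd ℂ) (∑ i, (starRingEnd ℂ) (τ j i) * τ k i) *
          (∑ i, (starRingEnd ℂ) (τ j i) * τ k i) := by
      simp only [PiLp.inner_apply, RCLike.inner_apply, hw, PiLp.toLp_apply]
      rw [Fintype.sum_prod_type, map_sum, Finset.sum_mul_sum]
      refine Finset.sum_congr rfl fun i _ => Finset.sum_congr rfl fun i' _ => ?_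
      simp only [map_mul, RingHomCompTriple.comp_apply, RingHom.id_apply,
        starRingEnd_self_apply]
      ring
    rw [this, ← hc, Complex.conj_mul', ← Complex.ofReal_pow]
  -- the double sum equals ‖W‖²
  have hsum : ∑ j, ∑ k, ‖(inner ℂ (τ j) (τ k) : ℂ)‖ ^ 2 = ‖W‖ ^ 2 := by
    have h1 : (inner ℂ W W : ℂ) = ∑ j, ∑ k, (inner ℂ (w j) (w k) : ℂ) := by
      rw [hW, sum_inner]
      exact Finset.sum_congr rfl fun j _ => inner_sum _ _ _
    have h2 : (inner ℂ W W : ℂ) = ((‖W‖ ^ 2 : ℝ) : ℂ) := by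
      rw [@inner_self_eq_norm_sq_to_K ℂ]
      norm_cast
    have h3 : ((∑ j, ∑ k, ‖(inner ℂ (τ j) (τ k) : ℂ)‖ ^ 2 : ℝ) : ℂ) = ((‖W‖ ^ 2 : ℝ) : ℂ) := by
      rw [← h2, h1]
      push_cast
      exact Finset.sum_congr rfl fun j _ => Finset.sum_congr rfl fun k _ => (hinner j k).symm
    exact_mod_cast h3
  -- ⟪u, W⟫ = n
  have huW : (inner ℂ u W : ℂ) = (n : ℂ) := by
    rw [hW, inner_sum]
    have : ∀ j, (inner ℂ u (w j) : ℂ) = 1 := by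
      intro j
      have hτj : (inner ℂ (τ j) (τ j) : ℂ) = 1 := by
        rw [@inner_self_eq_norm_sq_to_K ℂ, hτ j]
        norm_num
      calc (inner ℂ u (w j) : ℂ)
          = ∑ p : Fin d × Fin d, (starRingEnd ℂ) (u p) * ((starRingEnd ℂ) (τ j p.1) * τ j p.2) := by
            simp [PiLp.inner_apply, RCLike.inner_apply, hw, mul_comm]
        _ = ∑ i, (starRingEnd ℂ) (τ j i) * τ j i := by
            rw [Fintype.sum_prod_type]
            refine Finset.sum_congr rfl fun i _ => ?_
            rw [Finset.sum_eq_single i]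
            · simp [hu]
            · intro i' _ hne
              simp [hu, hne.symm]
            · simp
        _ = (inner ℂ (τ j) (τ j) : ℂ) := by
            rw [PiLp.inner_apply]; refine Finset.sum_congr rfl fun _ _ => ?_
            simp only [RCLike.inner_apply]; ring
        _ = 1 := hτj
    simp [this]
  -- ‖u‖² = d
  have hunorm : ‖u‖ ^ 2 = (d : ℝ) := by
    rw [EuclideanSpace.norm_eq]
    rw [Real.sq_sqrt (by positivity)]
    rw [Fintype.sum_prod_type]
    calc (∑ i : Fin d, ∑ i' : Fin d, ‖u (i, i')‖ ^ 2)
        = ∑ i : Fin d, (1 : ℝ) := by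
          refine Finset.sum_congr rfl fun i _ => ?_
          rw [Finset.sum_eq_single i]
          · simp [hu]
          · intro i' _ hne; simp [hu, hne.symm]
          · simp
      _ = (d : ℝ) := by simp
  -- Cauchy-Schwarz
  have hcs := norm_inner_le_norm (𝕜 := ℂ) u W
  rw [huW] at hcs
  have hn : ‖(n : ℂ)‖ = (n : ℝ) := by simp
  rw [hn] at hcs
  rw [hsum, ge_iff_le, div_le_iff₀ (by exact_mod_cast hd)]
  have h := mul_le_mul hcs hcs (Nat.cast_nonneg n) (by positivity)
  calc (n : ℝ) ^ 2 = (n : ℝ) * (n : ℝ) := sq (n:ℝ)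
    _ ≤ (‖u‖ * ‖W‖) * (‖u‖ * ‖W‖) := h
    _ = ‖W‖ ^ 2 * ‖u‖ ^ 2 := by ring
    _ = ‖W‖ ^ 2 * (d : ℝ) := by rw [hunorm]
end

section
/- (Classical first order Welch bound, max form) Let n > d and let τ_1,…,τ_n be unit vectors in ℂ^d. Then max_{j≠k} |⟨τ_j, τ_k⟩|² ≥ (n−d)/(d(n−1)). -/
open Finset Matrix Complex

lemma frob {m k : Type*} [Fintype m] [Fintype k] (M : Matrix m k ℂ) :
    (Matrix.trace (M * Mᴴ)).re = ∑ i, ∑ j, ‖M i j‖ ^ 2 := by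
  simp [Matrix.trace, Matrix.diag, Matrix.mul_apply, Matrix.conjTranspose_apply,
    Complex.mul_conj, Complex.re_sum, Complex.normSq_eq_norm_sq, ← Complex.ofReal_pow]

theorem stmt_10 (d n : ℕ) (hd : 1 ≤ d) (hnd : n > d)
    (τ : Fin n → EuclideanSpace ℂ (Fin d)) (hτ : ∀ j, ‖τ j‖ = 1) :
    sSup {x : ℝ | ∃ j k, j ≠ k ∧ x = ‖(inner ℂ (τ j) (τ k) : ℂ)‖ ^ 2} ≥
      ((n : ℝ) - d) / (d * ((n : ℝ) - 1)) := by
  classical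
  have hd0 : (0:ℝ) < d := by exact_mod_cast hd
  have hn2 : 2 ≤ n := by omega
  have hn1 : (1:ℝ) < n := by exact_mod_cast (by omega : 1 < n)
  set A : Matrix (Fin d) (Fin n) ℂ := Matrix.of fun a j => τ j a with hA
  set G : Matrix (Fin n) (Fin n) ℂ := Aᴴ * A with hG
  set T : Matrix (Fin d) (Fin d) ℂ := A * Aᴴ with hT
  have hGjk : ∀ j k, G j k = (inner ℂ (τ j) (τ k) : ℂ) := by
    intro j k
    simp [hG, hA, Matrix.mul_apply, Matrix.conjTranspose_apply, PiLp.inner_apply,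
      RCLike.inner_apply]
    exact Finset.sum_congr rfl fun _ _ => mul_comm _ _
  -- trace identity
  have htr_eq : (Matrix.trace (G * Gᴴ)).re = (Matrix.trace (T * Tᴴ)).re := by
    have h : Matrix.trace (G * Gᴴ) = Matrix.trace (T * Tᴴ) := by
      have hGH : Gᴴ = G := by
        rw [hG, Matrix.conjTranspose_mul, Matrix.conjTranspose_conjTranspose]
      have hTH : Tᴴ = T := by
        rw [hT, Matrix.conjTranspose_mul, Matrix.conjTranspose_conjTranspose]
      rw [hGH, hTH, hG, hT, Matrix.mul_assoc, Matrix.trace_mul_comm]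
      simp [Matrix.mul_assoc]
    rw [h]
  -- norms of components
  have h1 : ∀ j, ∑ a, Complex.normSq (τ j a) = 1 := by
    intro j
    have h2 : ‖τ j‖ ^ 2 = RCLike.re (inner ℂ (τ j) (τ j) : ℂ) := norm_sq_eq_re_inner (𝕜 := ℂ) (τ j)
    rw [hτ j, PiLp.inner_apply] at h2
    simpa [PiLp.inner_apply, RCLike.inner_apply, Complex.re_sum, Complex.mul_conj, Complex.normSq_eq_norm_sq, ← Complex.ofReal_pow,
      ← Complex.normSq_eq_conj_mul_self] using h2.symm
  -- trace of T
  have htrT : ∑ a, (T a a).re = (n : ℝ) := by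
    have : ∀ a, (T a a).re = ∑ j, Complex.normSq (τ j a) := by
      intro a
      simp [hT, hA, Matrix.mul_apply, Matrix.conjTranspose_apply, Complex.re_sum,
        Complex.mul_conj]
    rw [Finset.sum_congr rfl fun a _ => this a, Finset.sum_comm]
    simp [h1]
  -- Cauchy-Schwarz chain
  have hcs : (n : ℝ) ^ 2 ≤ d * ∑ j, ∑ k, ‖(inner ℂ (τ j) (τ k) : ℂ)‖ ^ 2 := by
    have c1 : ((n : ℝ)) ^ 2 ≤ (d : ℝ) * ∑ a, (T a a).re ^ 2 := by
      rw [← htrT]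
      have := sq_sum_le_card_mul_sum_sq (s := (Finset.univ : Finset (Fin d)))
        (f := fun a => (T a a).re)
      simpa using this
    have c2 : ∑ a, (T a a).re ^ 2 ≤ ∑ a, ∑ b, ‖T a b‖ ^ 2 := by
      apply Finset.sum_le_sum
      intro a _
      have hre : (T a a).re ^ 2 ≤ ‖T a a‖ ^ 2 := by
        have h := Complex.abs_re_le_norm (T a a)
        rw [← _root_.sq_abs ((T a a).re)]
        exact pow_le_pow_left₀ (abs_nonneg _) h 2
      refine hre.trans ?_
      exact Finset.single_le_sum (f := fun b => ‖T a b‖ ^ 2)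
        (fun b _ => by positivity) (Finset.mem_univ a)
    have c3 : ∑ a, ∑ b, ‖T a b‖ ^ 2 = ∑ j, ∑ k, ‖(inner ℂ (τ j) (τ k) : ℂ)‖ ^ 2 := by
      rw [← frob T]
      have hTH : Tᴴ = T := by
        rw [hT, Matrix.conjTranspose_mul, Matrix.conjTranspose_conjTranspose]
      rw [show (T * Tᴴ) = T * Tᴴ from rfl, ← htr_eq, frob G]
      exact Finset.sum_congr rfl fun j _ => Finset.sum_congr rfl fun k _ => by rw [hGjk]
    calc ((n:ℝ))^2 ≤ (d:ℝ) * ∑ a, (T a a).re ^ 2 := c1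
      _ ≤ (d:ℝ) * ∑ a, ∑ b, ‖T a b‖ ^ 2 := by
          exact mul_le_mul_of_nonneg_left c2 (le_of_lt hd0)
      _ = (d:ℝ) * ∑ j, ∑ k, ‖(inner ℂ (τ j) (τ k) : ℂ)‖ ^ 2 := by rw [c3]
  -- off-diagonal sum
  set f : Fin n → Fin n → ℝ := fun j k => ‖(inner ℂ (τ j) (τ k) : ℂ)‖ ^ 2 with hf
  have hdiag : ∀ j, f j j = 1 := by
    intro j
    have h2 : (inner ℂ (τ j) (τ j) : ℂ) = 1 := by
      rw [inner_self_eq_norm_sq_to_K (τ j), hτ j]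
      norm_num
    show ‖(inner ℂ (τ j) (τ j) : ℂ)‖ ^ 2 = 1
    rw [h2]
    norm_num
  have hsplit : ∀ j, ∑ k, f j k = f j j + ∑ k ∈ Finset.univ \ {j}, f j k := by
    intro j
    rw [Finset.sum_eq_sum_sdiff_singleton_add (Finset.mem_univ j)]
    ring
  have hoff : (n : ℝ) * ((n : ℝ) - d) / d ≤ ∑ j, ∑ k ∈ Finset.univ \ {j}, f j k := by
    have htot : (n:ℝ)^2 / d ≤ ∑ j, ∑ k, f j k := by
      rw [div_le_iff₀ hd0]
      linarith [hcs]
    have : ∑ j, ∑ k, f j k = (n : ℝ) + ∑ j, ∑ k ∈ Finset.univ \ {j}, f j k := by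
      rw [Finset.sum_congr rfl fun j _ => hsplit j, Finset.sum_add_distrib]
      simp [hdiag]
    rw [this] at htot
    rw [div_le_iff₀ hd0] at htot ⊢
    nlinarith [htot]
  -- existence of a large off-diagonal term
  set c : ℝ := ((n : ℝ) - d) / (d * ((n : ℝ) - 1)) with hc
  have hex : ∃ j k, j ≠ k ∧ c ≤ f j k := by
    have hd' : (d:ℝ) ≠ 0 := ne_of_gt hd0
    have hn1' : (n:ℝ) - 1 ≠ 0 := by linarith
    haveI : NeZero n := ⟨by omega⟩
    by_contra hcon
    push_neg at hcon
    have hlt : ∀ j, ∀ k ∈ Finset.univ \ {j}, f j k < c := by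
      intro j k hk
      simp only [Finset.mem_sdiff, Finset.mem_singleton, Finset.mem_univ, true_and] at hk
      exact hcon j k (fun h => hk h.symm)
    have hne : ∀ j : Fin n, (Finset.univ \ {j} : Finset (Fin n)).Nonempty := by
      intro j
      have : 2 ≤ (Finset.univ : Finset (Fin n)).card := by simpa using hn2
      rw [← Finset.card_pos]
      rw [Finset.card_sdiff_of_subset (by simp)]
      simp
      omega
    have hsum_lt : ∑ j, ∑ k ∈ Finset.univ \ {j}, f j k < ∑ j : Fin n, (((n:ℝ) - 1) * c) := by
      apply Finset.sum_lt_sum_of_nonempty Finset.univ_nonempty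
      intro j _
      have := Finset.sum_lt_sum_of_nonempty (hne j) (fun k hk => hlt j k hk)
      calc ∑ k ∈ Finset.univ \ {j}, f j k < ∑ k ∈ Finset.univ \ {j}, c := this
        _ = ((n:ℝ) - 1) * c := by
            rw [Finset.sum_const, Finset.card_sdiff_of_subset (by simp), Finset.card_univ,
              Fintype.card_fin]
            simp only [Finset.card_singleton, nsmul_eq_mul]
            rw [Nat.cast_sub (by omega)]
            norm_num
    rw [Finset.sum_const] at hsum_lt
    simp only [Finset.card_univ, Fintype.card_fin, nsmul_eq_mul] at hsum_lt
    have hval : (n:ℝ) * (((n:ℝ) - 1) * c) = (n : ℝ) * ((n : ℝ) - d) / d := by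
      rw [hc]
      field_simp
    rw [hval] at hsum_lt
    linarith [hoff]
  obtain ⟨j, k, hjk, hck⟩ := hex
  have hmem : f j k ∈ {x : ℝ | ∃ j k, j ≠ k ∧ x = ‖(inner ℂ (τ j) (τ k) : ℂ)‖ ^ 2} :=
    ⟨j, k, hjk, rfl⟩
  have hbdd : BddAbove {x : ℝ | ∃ j k, j ≠ k ∧ x = ‖(inner ℂ (τ j) (τ k) : ℂ)‖ ^ 2} := by
    refine ⟨1, fun x hx => ?_⟩
    obtain ⟨j', k', _, rfl⟩ := hx
    have := norm_inner_le_norm (𝕜 := ℂ) (τ j') (τ k')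
    rw [hτ j', hτ k'] at this
    nlinarith [norm_nonneg (inner ℂ (τ j') (τ k') : ℂ)]
  exact le_trans hck (le_csSup hbdd hmem)
end

section
/- (Higher order classical Welch bounds) Let n > d, m ∈ ℕ, and let τ_1,…,τ_n be unit vectors in ℂ^d. Then ∑_{j=1}^n ∑_{k=1}^n |⟨τ_j, τ_k⟩|^{2m} ≥ n² / C(d+m−1, m), where C(d+m−1,m) is the binomial coefficient. -/
open Finset ComplexConjugate

/-- `conj z * z` is the (complex coercion of the) squared norm. -/
lemma conj_mul_self_eq (z : ℂ) : conj z * z = ((‖z‖ : ℝ) : ℂ) ^ 2 := by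
  rw [mul_comm, Complex.mul_conj, Complex.normSq_eq_norm_sq]
  push_cast
  ring

/-- Frame-bound core: for any family of vectors `u j : κ → ℂ`,
`(∑ j, ‖u j‖²)² ≤ (card κ) * ∑ j k, |⟨u j, u k⟩|²`. -/
lemma welch_aux {ι κ : Type*} [Fintype ι] [Fintype κ] (u : ι → κ → ℂ) :
    (∑ j, ∑ s, ‖u j s‖ ^ 2 : ℝ) ^ 2 ≤
      (Fintype.card κ) * ∑ j, ∑ k, ‖∑ s, conj (u j s) * u k s‖ ^ 2 := by
  classical
  set G : ι → ι → ℂ := fun j k => ∑ s, conj (u j s) * u k s with hGdef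
  set S : κ → κ → ℂ := fun s s' => ∑ j, conj (u j s) * u j s' with hSdef
  set F : ι → ι → κ → κ → ℂ :=
    fun j k s s' => conj (u j s) * u k s * (u j s' * conj (u k s')) with hFdef
  have hSdiag : ∀ s, S s s = ((∑ j, ‖u j s‖ ^ 2 : ℝ) : ℂ) := by
    intro s
    rw [hSdef]
    push_cast
    exact Finset.sum_congr rfl fun j _ => conj_mul_self_eq (u j s)
  have expandS : ∀ s s', S s s' * conj (S s s') = ∑ j, ∑ k, F j k s s' := by
    intro s s'
    rw [hSdef, map_sum, Finset.sum_mul_sum]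
    exact Finset.sum_congr rfl fun j _ => Finset.sum_congr rfl fun k _ => by
      simp only [hFdef, map_mul, RingHomCompTriple.comp_apply, RCLike.conj_conj, RingHom.id_apply]
      try ring
  have expandG : ∀ j k, G j k * conj (G j k) = ∑ s, ∑ s', F j k s s' := by
    intro j k
    rw [hGdef, map_sum, Finset.sum_mul_sum]
    exact Finset.sum_congr rfl fun s _ => Finset.sum_congr rfl fun s' _ => by
      simp only [hFdef, map_mul, RingHomCompTriple.comp_apply, RCLike.conj_conj, RingHom.id_apply]
      try ring
  have key : (∑ s, ∑ s', ‖S s s'‖ ^ 2 : ℝ) = ∑ j, ∑ k, ‖G j k‖ ^ 2 := by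
    have keyC : (∑ s, ∑ s', S s s' * conj (S s s') : ℂ)
        = ∑ j, ∑ k, G j k * conj (G j k) := by
      calc (∑ s, ∑ s', S s s' * conj (S s s') : ℂ)
          = ∑ s, ∑ s', ∑ j, ∑ k, F j k s s' := by
            exact Finset.sum_congr rfl fun s _ => Finset.sum_congr rfl fun s' _ => expandS s s'
        _ = ∑ s, ∑ j, ∑ s', ∑ k, F j k s s' :=
            Finset.sum_congr rfl fun s _ => Finset.sum_comm
        _ = ∑ j, ∑ s, ∑ s', ∑ k, F j k s s' := Finset.sum_comm
        _ = ∑ j, ∑ s, ∑ k, ∑ s', F j k s s' :=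
            Finset.sum_congr rfl fun j _ => Finset.sum_congr rfl fun s _ => Finset.sum_comm
        _ = ∑ j, ∑ k, ∑ s, ∑ s', F j k s s' :=
            Finset.sum_congr rfl fun j _ => Finset.sum_comm
        _ = ∑ j, ∑ k, G j k * conj (G j k) :=
            Finset.sum_congr rfl fun j _ => Finset.sum_congr rfl fun k _ => (expandG j k).symm
    have := keyC
    simp only [RCLike.mul_conj] at this
    exact_mod_cast this
  calc (∑ j, ∑ s, ‖u j s‖ ^ 2 : ℝ) ^ 2
      = (∑ s, ∑ j, ‖u j s‖ ^ 2) ^ 2 := by rw [Finset.sum_comm]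
    _ ≤ (Fintype.card κ) * ∑ s, (∑ j, ‖u j s‖ ^ 2) ^ 2 := by
        simpa using sq_sum_le_card_mul_sum_sq
          (s := (univ : Finset κ)) (f := fun s => ∑ j, ‖u j s‖ ^ 2)
    _ ≤ (Fintype.card κ) * ∑ s, ∑ s', ‖S s s'‖ ^ 2 := by
        gcongr with s _
        have h1 : (∑ j, ‖u j s‖ ^ 2) ^ 2 = ‖S s s‖ ^ 2 := by
          rw [hSdiag s, Complex.norm_real, Real.norm_eq_abs, abs_of_nonneg (by positivity)]
        rw [h1]
        exact Finset.single_le_sum (f := fun s' => ‖S s s'‖ ^ 2) (fun s' _ => by positivity) (mem_univ s)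
    _ = (Fintype.card κ) * ∑ j, ∑ k, ‖G j k‖ ^ 2 := by rw [key]

theorem stmt_11 (d n m : ℕ) (hnd : n > d)
    (τ : Fin n → EuclideanSpace ℂ (Fin d)) (hτ : ∀ j, ‖τ j‖ = 1) :
    ∑ j, ∑ k, ‖(inner ℂ (τ j) (τ k) : ℂ)‖ ^ (2 * m) ≥
      (n : ℝ) ^ 2 / ((d + m - 1).choose m : ℝ) := by
  classical
  rcases Nat.eq_zero_or_pos d with hd | hd
  · exfalso
    subst hd
    have h0 := hτ ⟨0, hnd⟩
    have hz : τ ⟨0, hnd⟩ = 0 := Subsingleton.elim _ _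
    rw [hz, norm_zero] at h0
    norm_num at h0
  have hDpos : 0 < (d + m - 1).choose m := Nat.choose_pos (by omega)
  set u : Fin n → Sym (Fin d) m → ℂ :=
    fun j s => ((Real.sqrt s.1.countPerms : ℝ) : ℂ) * (s.1.map (τ j)).prod with hu
  have hcu : ∀ j k (s : Sym (Fin d) m), conj (u j s) * u k s
      = (s.1.countPerms : ℂ) * (s.1.map fun i => conj (τ j i) * τ k i).prod := by
    intro j k s
    have hconjP : conj ((s.1.map (τ j)).prod) = (s.1.map fun i => conj (τ j i)).prod := by
      rw [map_multiset_prod, Multiset.map_map]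
      rfl
    have hs : ((Real.sqrt s.1.countPerms : ℝ) : ℂ) * ((Real.sqrt s.1.countPerms : ℝ) : ℂ)
        = (s.1.countPerms : ℂ) := by
      rw [← Complex.ofReal_mul, Real.mul_self_sqrt (by positivity)]
      push_cast; ring
    have step1 : conj (u j s) * u k s = (s.1.countPerms : ℂ)
        * ((s.1.map fun i => conj (τ j i)).prod * (s.1.map (τ k)).prod) := by
      rw [hu]
      simp only [map_mul, Complex.conj_ofReal, hconjP]
      rw [← hs]; ring
    rw [step1, ← Multiset.prod_map_mul]
  have hG : ∀ j k, (∑ s : Sym (Fin d) m, conj (u j s) * u k s)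
      = (inner ℂ (τ j) (τ k) : ℂ) ^ m := by
    intro j k
    have hp := Finset.sum_pow (s := (univ : Finset (Fin d)))
      (fun i => conj (τ j i) * τ k i) m
    rw [Finset.sym_univ] at hp
    have hinner : (inner ℂ (τ j) (τ k) : ℂ) = ∑ i, conj (τ j i) * τ k i := by
      simp [PiLp.inner_apply, RCLike.inner_apply, mul_comm]
    rw [hinner, hp]
    exact Finset.sum_congr rfl fun s _ => hcu j k s
  have hτinner : ∀ j, (inner ℂ (τ j) (τ j) : ℂ) = 1 := fun j => by
    rw [inner_self_eq_norm_sq_to_K, hτ]; norm_num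
  have hnorm : ∀ j, (∑ s : Sym (Fin d) m, ‖u j s‖ ^ 2 : ℝ) = 1 := by
    intro j
    have h := hG j j
    rw [hτinner, one_pow] at h
    have hC : ((∑ s : Sym (Fin d) m, ‖u j s‖ ^ 2 : ℝ) : ℂ) = 1 := by
      push_cast
      rw [← h]
      exact Finset.sum_congr rfl fun s _ => (conj_mul_self_eq (u j s)).symm
    exact_mod_cast hC
  have h1 : (∑ j, ∑ s : Sym (Fin d) m, ‖u j s‖ ^ 2 : ℝ) = n := by
    rw [Finset.sum_congr rfl fun j _ => hnorm j]
    simp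
  have h2 : (Fintype.card (Sym (Fin d) m) : ℝ) = ((d + m - 1).choose m : ℝ) := by
    rw [Sym.card_sym_eq_choose]
    simp
  have h3 : ∀ j k, ‖∑ s : Sym (Fin d) m, conj (u j s) * u k s‖ ^ 2
      = ‖(inner ℂ (τ j) (τ k) : ℂ)‖ ^ (2 * m) := by
    intro j k
    rw [hG, norm_pow, ← pow_mul, mul_comm]
  have haux := welch_aux u
  rw [h1, h2] at haux
  simp only [h3] at haux
  rw [ge_iff_le, div_le_iff₀ (by exact_mod_cast hDpos)]
  calc (n : ℝ) ^ 2 ≤ ((d + m - 1).choose m : ℝ)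
        * ∑ j, ∑ k, ‖(inner ℂ (τ j) (τ k) : ℂ)‖ ^ (2 * m) := haux
    _ = (∑ j, ∑ k, ‖(inner ℂ (τ j) (τ k) : ℂ)‖ ^ (2 * m)) * ((d + m - 1).choose m : ℝ) := by
        ring
end
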